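/- arXiv:1511.08510 — 2 statements merged into one kernel-verified Lean document; each statement's English description precedes it below -/
import Mathlib

section
/- Let Ω and P be compact sets with h: P × Ω → ℂ bounded, p ↦ h_p sequentially continuous in the sup-norm, and suppose h_p is not identically zero for some p. Then each step of the magic point empirical interpolation algorithm is well-defined: the arg-max operations in the greedy selection attain their suprema, and the denominator r_M(z*_M) in the definition of q_M is nonzero as long as the span of {h_p : p ∈ P} has dimension at least M. -/
open Filter

/-- Well-definedness of each step of the magic point empirical interpolation
algorithm. Let `Ω` and `P` be compact, `h : P × Ω → ℂ` (continuous in `z`, hence bounded),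
`p ↦ h_p` sequentially continuous in sup-norm, and `h_p ≢ 0` for some `p`. Then, given the
data `z*_1,…,z*_n` and `θ_1^n,…,θ_n^n` of the previous step (so that
`I_n(h)(p,·) = ∑_m h_p(z*_m) • θ_m^n`):
(i) the arg-max over `p` of `‖h_p − I_n(h)(p,·)‖_∞` is attained;
(ii) for any such maximizer `p*`, the arg-max over `z` of `|h_{p*}(z) − I_n(h)(p*,z)|` is
attained; and
(iii) for any such maximizers `p*, z*`, if the span of `{h_p : p ∈ P}` has dimension at
least `n+1`, the denominator `r_{n+1}(z*) = h_{p*}(z*) − I_n(h)(p*,z*)` is nonzero. -/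
theorem magic_point_algorithm_welldefined
    {P Ω : Type*} [MetricSpace P] [CompactSpace P] [Nonempty P]
    [TopologicalSpace Ω] [CompactSpace Ω] [Nonempty Ω]
    (h : P → C(Ω, ℂ))
    (hseq : ∀ (pi : ℕ → P) (p : P), Tendsto pi atTop (nhds p) →
      Tendsto (fun i => ‖h (pi i) - h p‖) atTop (nhds 0))
    (hnz : ∃ p : P, h p ≠ 0)
    (n : ℕ) (zs : Fin n → Ω) (θ : Fin n → C(Ω, ℂ)) :
    (∃ p' : P, ∀ p : P,
        ‖h p - ∑ m : Fin n, h p (zs m) • θ m‖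
          ≤ ‖h p' - ∑ m : Fin n, h p' (zs m) • θ m‖) ∧
    (∀ p' : P,
      (∀ p : P, ‖h p - ∑ m : Fin n, h p (zs m) • θ m‖
          ≤ ‖h p' - ∑ m : Fin n, h p' (zs m) • θ m‖) →
      (∃ z' : Ω, ∀ z : Ω,
          ‖(h p' - ∑ m : Fin n, h p' (zs m) • θ m) z‖
            ≤ ‖(h p' - ∑ m : Fin n, h p' (zs m) • θ m) z'‖) ∧
      (∀ z' : Ω,
        (∀ z : Ω, ‖(h p' - ∑ m : Fin n, h p' (zs m) • θ m) z‖
            ≤ ‖(h p' - ∑ m : Fin n, h p' (zs m) • θ m) z'‖) →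
        ((n + 1 : Cardinal) ≤ Module.rank ℂ (Submodule.span ℂ (Set.range h))) →
        (h p' - ∑ m : Fin n, h p' (zs m) • θ m) z' ≠ 0)) := by
  classical
  set g : P → C(Ω, ℂ) := fun p => h p - ∑ m : Fin n, h p (zs m) • θ m with hgdef
  have key : ∀ p q : P, ‖g q - g p‖ ≤ (1 + ∑ m : Fin n, ‖θ m‖) * ‖h q - h p‖ := by
    intro p q
    have h1 : g q - g p = (h q - h p) - ∑ m : Fin n, ((h q - h p) (zs m)) • θ m := by
      simp only [hgdef, ContinuousMap.sub_apply, sub_smul, Finset.sum_sub_distrib]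
      abel
    rw [h1]
    calc ‖(h q - h p) - ∑ m : Fin n, ((h q - h p) (zs m)) • θ m‖
        ≤ ‖h q - h p‖ + ‖∑ m : Fin n, ((h q - h p) (zs m)) • θ m‖ := norm_sub_le _ _
      _ ≤ ‖h q - h p‖ + ∑ m : Fin n, ‖((h q - h p) (zs m)) • θ m‖ := by
          gcongr; exact norm_sum_le _ _
      _ ≤ ‖h q - h p‖ + ∑ m : Fin n, ‖h q - h p‖ * ‖θ m‖ := by
          gcongr with m _
          rw [norm_smul]
          gcongr
          exact ContinuousMap.norm_coe_le_norm _ _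
      _ = (1 + ∑ m : Fin n, ‖θ m‖) * ‖h q - h p‖ := by
          rw [← Finset.mul_sum]; ring
  have hgc : Continuous g := by
    rw [continuous_iff_seqContinuous]
    intro pi p hpi
    have h0 := hseq pi p hpi
    have h2 : Tendsto (fun i => ‖g (pi i) - g p‖) atTop (nhds 0) := by
      apply squeeze_zero (fun i => norm_nonneg _) (fun i => key p (pi i))
      have := h0.const_mul (1 + ∑ m : Fin n, ‖θ m‖)
      simpa using this
    exact tendsto_iff_norm_sub_tendsto_zero.mpr h2
  obtain ⟨p0, -, hp0⟩ := isCompact_univ.exists_isMaxOn Set.univ_nonempty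
    hgc.norm.continuousOn
  refine ⟨⟨p0, fun p => hp0 (Set.mem_univ p)⟩, ?_⟩
  intro p' hp'
  obtain ⟨z0, -, hz0⟩ := isCompact_univ.exists_isMaxOn Set.univ_nonempty
    ((g p').continuous.norm).continuousOn
  refine ⟨⟨z0, fun z => hz0 (Set.mem_univ z)⟩, ?_⟩
  intro z' hz' hrank hzero
  -- From the maximizer being zero, g p' = 0.
  have hgp' : g p' = 0 := by
    ext z
    have := hz' z
    rw [hzero] at this
    simp only [norm_zero] at this
    have h4 : ‖g p' z‖ ≤ 0 := this
    exact norm_le_zero_iff.mp h4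
  -- Hence g p = 0 for all p.
  have hall : ∀ p : P, g p = 0 := by
    intro p
    have := hp' p
    rw [show (h p' - ∑ m : Fin n, h p' (zs m) • θ m) = g p' from rfl, hgp'] at this
    simp only [norm_zero] at this
    have hle : ‖g p‖ ≤ 0 := this
    simpa [norm_le_zero_iff] using hle
  -- Then range h ⊆ span of the θ's.
  have hsub : Set.range h ⊆ (Submodule.span ℂ (Set.range θ) : Set C(Ω, ℂ)) := by
    rintro _ ⟨p, rfl⟩
    have hp : h p = ∑ m : Fin n, h p (zs m) • θ m := by
      have := hall p
      rw [hgdef] at this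
      simpa [sub_eq_zero] using this
    rw [hp]
    exact Submodule.sum_mem _ fun m _ =>
      Submodule.smul_mem _ _ (Submodule.subset_span ⟨m, rfl⟩)
  have hle : Submodule.span ℂ (Set.range h) ≤ Submodule.span ℂ (Set.range θ) :=
    Submodule.span_le.mpr hsub
  have hrank2 : Module.rank ℂ (Submodule.span ℂ (Set.range h)) ≤ (n : Cardinal) := by
    calc Module.rank ℂ (Submodule.span ℂ (Set.range h))
        ≤ Module.rank ℂ (Submodule.span ℂ (Set.range θ)) := Submodule.rank_mono hle
      _ ≤ Cardinal.mk (Set.range θ) := rank_span_le _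
      _ ≤ (n : Cardinal) := by
          simpa using Cardinal.mk_range_le_lift (f := θ)
  have : (n + 1 : Cardinal) ≤ (n : Cardinal) := le_trans hrank hrank2
  have h3 : (n + 1 : ℕ) ≤ n := by exact_mod_cast this
  omega
end

section
/- Let Ω = [a,b] ⊂ ℝ compact, X ⊂ ℝ compact, Q a parameter set, and suppose for η > sqrt(15/8)(b−a) that sup_{q∈Q} ∫_Ω e^{η|x|} |f_q(x)| dx < ∞. Define h_{(q,x)}(z) = (1/2π) e^{−izx} \hat{f_q}(z) with \hat{f_q}(z) = ∫_Ω e^{izy} f_q(y) dy. Then z ↦ \hat{f_q}(z) is analytic on the Bernstein ellipse B(Ω, ρ(η)) with ρ(η) = 2η/(b−a) + sqrt((2η/(b−a))² + 1) > 4, and sup over (q,x,z) ∈ Q × X × B(Ω, ρ(η)) of |h_{(q,x)}(z)| is bounded by (1/2π) e^{η max(−inf X, sup X)} sup_q ∫_Ω e^{η|x|}|f_q(x)| dx. -/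
/-!
On the strip `|Im z| ≤ η` the kernel `e^{izy}` has modulus at most `e^{η|y|}`, which gives both the
bound on `h_{(q,x)}` and a dominating function for differentiating under the integral sign. The
ellipse `B([a,b],ρ)` lies in the strip `|Im z| ≤ (b-a)(ρ-ρ⁻¹)/4`, and `ρ(η) - ρ(η)⁻¹ = 4η/(b-a)`.
-/

open MeasureTheory Complex

/-- The open Bernstein ellipse `B([-1,1],ρ)`. -/
def bernsteinEllipse (ρ : ℝ) : Set ℂ :=
  {z : ℂ | ∃ w : ℂ, 1 ≤ ‖w‖ ∧ ‖w‖ < ρ ∧ z = (w + w⁻¹) / 2}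

/-- The affine transform `τ_{[a,b]}` mapping `[-1,1]` onto `[a,b]`. -/
noncomputable def tauAB (a b : ℝ) (x : ℂ) : ℂ :=
  (b : ℂ) + ((a - b : ℝ) : ℂ) / 2 * (1 - (x.re : ℂ)) +
    Complex.I * ((b - a : ℝ) : ℂ) / 2 * (x.im : ℂ)

/-- The generalized Bernstein ellipse `B([a,b],ρ) = τ_{[a,b]}(B([-1,1],ρ))`. -/
noncomputable def genBernsteinEllipse (a b ρ : ℝ) : Set ℂ :=
  tauAB a b '' bernsteinEllipse ρ

lemma norm_cexp_I_mul_mul_ofReal_le (z : ℂ) (y : ℝ) :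
    ‖cexp (I * z * y)‖ ≤ Real.exp (|z.im| * |y|) := by
  rw [Complex.norm_exp, ← abs_mul]
  gcongr
  simpa [Complex.mul_re] using neg_le_abs (z.im * y)

lemma differentiable_integral_cexp_mul {μ : Measure ℝ} {g : ℝ → ℂ} (hg : Integrable g μ)
    {M : ℝ} (hM : ∀ᵐ y ∂μ, |y| ≤ M) :
    Differentiable ℂ (fun z : ℂ => ∫ y, cexp (I * z * y) * g y ∂μ) := by
  intro z₀
  have hmeas : ∀ z : ℂ, AEStronglyMeasurable (fun y : ℝ => cexp (I * z * y) * g y) μ :=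
    fun z => (by fun_prop : Continuous fun y : ℝ => cexp (I * z * y)).aestronglyMeasurable.mul
      hg.aestronglyMeasurable
  have hkernel : ∀ z ∈ Metric.ball z₀ 1, ∀ y, |y| ≤ M →
      ‖cexp (I * z * y)‖ ≤ Real.exp ((‖z₀‖ + 1) * M) := by
    intro z hz y hy
    have hz' : ‖z‖ ≤ ‖z₀‖ + 1 := by
      have := norm_le_norm_add_norm_sub' z z₀
      rw [Metric.mem_ball, dist_eq_norm] at hz
      linarith
    refine (norm_cexp_I_mul_mul_ofReal_le z y).trans (Real.exp_le_exp.2 ?_)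
    exact mul_le_mul ((abs_im_le_norm z).trans hz') hy (abs_nonneg y) (by positivity)
  have hint : Integrable (fun y : ℝ => cexp (I * z₀ * y) * g y) μ := by
    refine (hg.norm.const_mul (Real.exp ((‖z₀‖ + 1) * M))).mono' (hmeas z₀) ?_
    filter_upwards [hM] with y hy
    rw [norm_mul]
    gcongr
    exact hkernel z₀ (Metric.mem_ball_self one_pos) y hy
  have hderiv := hasDerivAt_integral_of_dominated_loc_of_deriv_le
    (F := fun z (y : ℝ) => cexp (I * z * y) * g y)
    (F' := fun z (y : ℝ) => I * y * cexp (I * z * y) * g y)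
    (bound := fun y => M * Real.exp ((‖z₀‖ + 1) * M) * ‖g y‖)
    (Metric.ball_mem_nhds z₀ one_pos) (.of_forall hmeas) hint
    ((by fun_prop : Continuous fun y : ℝ => I * y * cexp (I * z₀ * y)).aestronglyMeasurable.mul
      hg.aestronglyMeasurable)
    (by
      filter_upwards [hM] with y hy z hz
      have hM0 : 0 ≤ M := (abs_nonneg y).trans hy
      simp only [norm_mul, norm_I, norm_real, Real.norm_eq_abs, one_mul]
      gcongr
      exact hkernel z hz y hy)
    (hg.norm.const_mul _)
    (.of_forall fun y z _ => by
      have hlin : HasDerivAt (fun z : ℂ => I * z * y) (I * y) z := by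
        simpa using ((hasDerivAt_id z).const_mul I).mul_const (y : ℂ)
      exact (hlin.cexp.mul_const (g y)).congr_deriv (by ring))
  exact hderiv.2.differentiableAt

lemma norm_integral_cexp_mul_le {μ : Measure ℝ} {g : ℝ → ℂ} {η : ℝ} {z : ℂ}
    (hz : |z.im| ≤ η) (hg : Integrable (fun y => Real.exp (η * |y|) * ‖g y‖) μ) :
    ‖∫ y, cexp (I * z * y) * g y ∂μ‖ ≤ ∫ y, Real.exp (η * |y|) * ‖g y‖ ∂μ := by
  refine norm_integral_le_of_norm_le hg (.of_forall fun y => ?_)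
  rw [norm_mul]
  gcongr
  exact (norm_cexp_I_mul_mul_ofReal_le z y).trans (by gcongr)

@[simp]
lemma tauAB_im (a b : ℝ) (x : ℂ) : (tauAB a b x).im = (b - a) / 2 * x.im := by
  simp [tauAB]

lemma abs_im_joukowski_le {w : ℂ} (hw : 1 ≤ ‖w‖) :
    |((w + w⁻¹) / 2).im| ≤ (‖w‖ - ‖w‖⁻¹) / 2 := by
  have hw0 : ‖w‖ ≠ 0 := by positivity
  have him : ((w + w⁻¹) / 2).im = w.im * (1 - (‖w‖ ^ 2)⁻¹) / 2 := by
    simp only [div_ofNat_im, add_im, inv_im, normSq_eq_norm_sq]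
    field_simp
    ring
  have hfac : 0 ≤ 1 - (‖w‖ ^ 2)⁻¹ := sub_nonneg.2 (inv_le_one_of_one_le₀ (one_le_pow₀ hw))
  rw [him, abs_div, abs_mul, abs_of_nonneg hfac, abs_two]
  calc |w.im| * (1 - (‖w‖ ^ 2)⁻¹) / 2 ≤ ‖w‖ * (1 - (‖w‖ ^ 2)⁻¹) / 2 := by
        gcongr; exact abs_im_le_norm w
    _ = (‖w‖ - ‖w‖⁻¹) / 2 := by field_simp

lemma abs_im_le_of_mem_genBernsteinEllipse {a b ρ : ℝ} (hab : a ≤ b) {z : ℂ}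
    (hz : z ∈ genBernsteinEllipse a b ρ) : |z.im| ≤ (b - a) / 4 * (ρ - ρ⁻¹) := by
  obtain ⟨_, ⟨w, hw1, hwρ, rfl⟩, rfl⟩ := hz
  have hw0 : 0 < ‖w‖ := one_pos.trans_le hw1
  rw [tauAB_im, abs_mul, abs_of_nonneg (by linarith)]
  calc (b - a) / 2 * |((w + w⁻¹) / 2).im| ≤ (b - a) / 2 * ((‖w‖ - ‖w‖⁻¹) / 2) :=
        mul_le_mul_of_nonneg_left (abs_im_joukowski_le hw1) (by linarith)
    _ ≤ (b - a) / 2 * ((ρ - ρ⁻¹) / 2) := by gcongr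
    _ = (b - a) / 4 * (ρ - ρ⁻¹) := by ring

lemma add_sqrt_sq_add_one_sub_inv (t : ℝ) :
    t + √(t ^ 2 + 1) - (t + √(t ^ 2 + 1))⁻¹ = 2 * t := by
  have hsq := Real.sq_sqrt (by positivity : (0 : ℝ) ≤ t ^ 2 + 1)
  rw [inv_eq_of_mul_eq_one_right (b := √(t ^ 2 + 1) - t) (by nlinarith)]
  ring

lemma four_lt_add_sqrt_sq_add_one {t : ℝ} (ht : 15 / 8 < t) : 4 < t + √(t ^ 2 + 1) := by
  nlinarith [Real.sq_sqrt (by positivity : (0 : ℝ) ≤ t ^ 2 + 1), Real.sqrt_nonneg (t ^ 2 + 1)]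

lemma abs_le_max_neg_csInf_csSup {X : Set ℝ} (hbelow : BddBelow X) (habove : BddAbove X)
    {x : ℝ} (hx : x ∈ X) : |x| ≤ max (-sInf X) (sSup X) :=
  abs_le'.2 ⟨(le_csSup habove hx).trans (le_max_right _ _),
    (neg_le_neg (csInf_le hbelow hx)).trans (le_max_left _ _)⟩

/-- Let `Ω = [a,b]`, `X ⊂ ℝ` compact, and suppose for
`η > √(15/8)(b−a)` that `∫_Ω e^{η|x|}|f_q(x)| dx ≤ K` uniformly in `q`. With
`h_{(q,x)}(z) = (1/2π) e^{−izx} \hat{f_q}(z)`, `\hat{f_q}(z) = ∫_Ω e^{izy} f_q(y) dy`: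
the map `z ↦ \hat{f_q}(z)` is analytic on the Bernstein ellipse `B(Ω,ρ(η))` with
`ρ(η) = 2η/(b−a) + √((2η/(b−a))² + 1) > 4`, and
`|h_{(q,x)}(z)| ≤ (1/2π) e^{η·max(−inf X, sup X)} K` for all `q`, `x ∈ X`,
`z ∈ B(Ω,ρ(η))`. -/
theorem magic_points_fourier_transform_analyticity_and_bound
    {Q : Type*} (a b : ℝ) (hab : a < b) (X : Set ℝ) (hX : IsCompact X)
    (η K : ℝ) (hη : Real.sqrt (15/8) * (b - a) < η)
    (f : Q → ℝ → ℂ)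
    (hfint : ∀ q, IntegrableOn (f q) (Set.Icc a b))
    (hfexp : ∀ q, IntegrableOn (fun x => Real.exp (η * |x|) * ‖f q x‖) (Set.Icc a b))
    (hK : ∀ q, (∫ x in Set.Icc a b, Real.exp (η * |x|) * ‖f q x‖) ≤ K) :
    4 < 2*η/(b-a) + Real.sqrt ((2*η/(b-a))^2 + 1) ∧
    (∀ q : Q, DifferentiableOn ℂ
      (fun z : ℂ => ∫ y in Set.Icc a b, Complex.exp (I * z * y) * f q y)
      (genBernsteinEllipse a b (2*η/(b-a) + Real.sqrt ((2*η/(b-a))^2 + 1)))) ∧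
    (∀ (q : Q), ∀ x ∈ X,
      ∀ z ∈ genBernsteinEllipse a b (2*η/(b-a) + Real.sqrt ((2*η/(b-a))^2 + 1)),
        ‖(1 / (2 * (Real.pi : ℂ))) * Complex.exp (-I * z * x) *
            ∫ y in Set.Icc a b, Complex.exp (I * z * y) * f q y‖
          ≤ (1 / (2 * Real.pi)) * Real.exp (η * max (-sInf X) (sSup X)) * K) := by
  have hba : 0 < b - a := sub_pos.2 hab
  have hηba : b - a < η :=
    lt_of_le_of_lt (le_mul_of_one_le_left hba.le (Real.one_le_sqrt.2 (by norm_num))) hη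
  have ht : 15 / 8 < 2 * η / (b - a) := by rw [lt_div_iff₀ hba]; linarith
  have hstrip : ∀ z ∈ genBernsteinEllipse a b (2*η/(b-a) + √((2*η/(b-a))^2 + 1)),
      |z.im| ≤ η := fun z hz =>
    (abs_im_le_of_mem_genBernsteinEllipse hab.le hz).trans_eq
      (by rw [add_sqrt_sq_add_one_sub_inv]; field_simp; ring)
  refine ⟨four_lt_add_sqrt_sq_add_one ht, fun q => ?_, fun q x hx z hz => ?_⟩
  · exact (differentiable_integral_cexp_mul (hfint q)
      (ae_restrict_of_forall_mem measurableSet_Icc fun y hy =>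
        abs_le_max_abs_abs hy.1 hy.2)).differentiableOn
  · have hkernel : ‖cexp (-I * z * x)‖ ≤ Real.exp (η * max (-sInf X) (sSup X)) := by
      rw [show -I * z * x = I * z * ((-x : ℝ) : ℂ) by push_cast; ring]
      refine (norm_cexp_I_mul_mul_ofReal_le z (-x)).trans (Real.exp_le_exp.2 ?_)
      rw [abs_neg]
      exact mul_le_mul (hstrip z hz) (abs_le_max_neg_csInf_csSup hX.bddBelow hX.bddAbove hx)
        (abs_nonneg x) (by linarith)
    have hfourier := (norm_integral_cexp_mul_le (hstrip z hz) (hfexp q)).trans (hK q)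
    rw [norm_mul, norm_mul, norm_div, norm_one, norm_mul, Complex.norm_two, norm_real,
      Real.norm_of_nonneg Real.pi_pos.le]
    gcongr
end
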